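/- arXiv:math/9506225 — 2 statements merged into one kernel-verified Lean document; each statement's English description precedes it below -/
import Mathlib

section
/- MacMahon's box formula C(a,b,c;a+b+c-1)/C(a,b,c;a+b+c-2) equals the hyperfactorial expression H(a+b+c) H(a) H(b) H(c) / (H(a+b) H(a+c) H(b+c)), where H(n) = \prod_{j=0}^{n-1} j! . -/
open Finset

/-- The box product `C(a,b,c;n) = ∏_{x<a,y<b,z<c} max(n-x-y-z, 1)`. -/
def boxProd3 (a b c n : ℕ) : ℕ :=
  ∏ x ∈ range a, ∏ y ∈ range b, ∏ z ∈ range c, max (n - x - y - z) 1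

/-- The hyperfactorial `H(n) = ∏_{j=0}^{n-1} j! = 1! 2! ⋯ (n-1)!`. -/
def hyperfact (n : ℕ) : ℕ := ∏ j ∈ range n, Nat.factorial j

lemma triple_reflect (a b c : ℕ) (f : ℕ → ℕ → ℕ → ℕ) :
    ∏ x ∈ range a, ∏ y ∈ range b, ∏ z ∈ range c, f x y z =
    ∏ x ∈ range a, ∏ y ∈ range b, ∏ z ∈ range c, f (a-1-x) (b-1-y) (c-1-z) := by
  rw [← Finset.prod_range_reflect (fun x => ∏ y ∈ range b, ∏ z ∈ range c, f x y z) a]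
  refine prod_congr rfl fun x _ => ?_
  rw [← Finset.prod_range_reflect (fun y => ∏ z ∈ range c, f (a-1-x) y z) b]
  refine prod_congr rfl fun y _ => ?_
  rw [← Finset.prod_range_reflect (fun z => f (a-1-x) (b-1-y) z) c]

lemma prod_asc (m k : ℕ) : m.factorial * ∏ i ∈ range k, (m + i + 1) = (m + k).factorial := by
  induction k with
  | zero => simp
  | succ k ih =>
    rw [prod_range_succ, ← mul_assoc, ih, show m + (k+1) = (m+k)+1 by ring,
      Nat.factorial_succ]
    ring

lemma prod_asc_q (m k : ℕ) : ∏ i ∈ range k, ((m : ℚ) + i + 1) =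
    (m + k).factorial / m.factorial := by
  rw [eq_div_iff (by exact_mod_cast m.factorial_ne_zero), mul_comm]
  have := congrArg (Nat.cast : ℕ → ℚ) (prod_asc m k)
  push_cast at this
  convert this using 2

lemma hyper_prod (m k : ℕ) :
    hyperfact m * ∏ i ∈ range k, (m + i).factorial = hyperfact (m + k) := by
  induction k with
  | zero => simp
  | succ k ih =>
    rw [prod_range_succ, ← mul_assoc, ih, show m + (k+1) = (m+k)+1 by ring]
    simp only [hyperfact]
    rw [prod_range_succ]

lemma hyperfact_ne (n : ℕ) : (hyperfact n : ℚ) ≠ 0 := by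
  have : 0 < hyperfact n := Finset.prod_pos fun i _ => i.factorial_pos
  exact_mod_cast this.ne'

lemma fact_ne (n : ℕ) : ((n.factorial : ℚ)) ≠ 0 := by
  exact_mod_cast n.factorial_ne_zero

lemma hyper_q (m k : ℕ) : ∏ i ∈ range k, ((m + i).factorial : ℚ) =
    hyperfact (m + k) / hyperfact m := by
  rw [eq_div_iff (hyperfact_ne m), mul_comm]
  exact_mod_cast congrArg (Nat.cast : ℕ → ℚ) (hyper_prod m k)

theorem macmahon_box_eq_hyperfactorial (a b c : ℕ) (ha : 0 < a) (hb : 0 < b) (hc : 0 < c) :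
    (boxProd3 a b c (a + b + c - 1) : ℚ) / boxProd3 a b c (a + b + c - 2) =
      (hyperfact (a + b + c) * hyperfact a * hyperfact b * hyperfact c : ℚ) /
        (hyperfact (a + b) * hyperfact (a + c) * hyperfact (b + c)) := by
  -- Step 1: express both box products as ascending triple products
  have e1 : boxProd3 a b c (a+b+c-1) =
      ∏ x ∈ range a, ∏ y ∈ range b, ∏ z ∈ range c, (x+y+z+2) := by
    rw [boxProd3, triple_reflect a b c (fun x y z => max (a+b+c-1 - x - y - z) 1)]
    refine prod_congr rfl fun x hx => prod_congr rfl fun y hy => prod_congr rfl fun z hz => ?_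
    simp only [mem_range] at hx hy hz
    omega
  have e2 : boxProd3 a b c (a+b+c-2) =
      ∏ x ∈ range a, ∏ y ∈ range b, ∏ z ∈ range c, (x+y+z+1) := by
    rw [boxProd3, triple_reflect a b c (fun x y z => max (a+b+c-2 - x - y - z) 1)]
    refine prod_congr rfl fun x hx => prod_congr rfl fun y hy => prod_congr rfl fun z hz => ?_
    simp only [mem_range] at hx hy hz
    omega
  -- Step 2: evaluate the inner z-products
  have q1 : (boxProd3 a b c (a+b+c-1) : ℚ) =
      ∏ x ∈ range a, ∏ y ∈ range b,
        (((x+y+c+1).factorial : ℚ) / ((x+y+1).factorial)) := by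
    rw [e1]; push_cast
    refine prod_congr rfl fun x _ => prod_congr rfl fun y _ => ?_
    calc ∏ z ∈ range c, ((x:ℚ)+y+z+2)
        = ∏ z ∈ range c, (((x+y+1 : ℕ) : ℚ) + z + 1) := by
          refine prod_congr rfl fun z _ => by push_cast; ring
      _ = ((x+y+1+c).factorial : ℚ) / (x+y+1).factorial := prod_asc_q (x+y+1) c
      _ = ((x+y+c+1).factorial : ℚ) / (x+y+1).factorial := by rw [show x+y+1+c = x+y+c+1 by ring]
  have q2 : (boxProd3 a b c (a+b+c-2) : ℚ) =
      ∏ x ∈ range a, ∏ y ∈ range b,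
        (((x+y+c).factorial : ℚ) / ((x+y).factorial)) := by
    rw [e2]; push_cast
    refine prod_congr rfl fun x _ => prod_congr rfl fun y _ => ?_
    calc ∏ z ∈ range c, ((x:ℚ)+y+z+1)
        = ∏ z ∈ range c, (((x+y : ℕ) : ℚ) + z + 1) := by
          refine prod_congr rfl fun z _ => by push_cast; ring
      _ = ((x+y+c).factorial : ℚ) / (x+y).factorial := prod_asc_q (x+y) c
  -- Step 3: the ratio as a single product over x
  have q3 : (boxProd3 a b c (a+b+c-1) : ℚ) / boxProd3 a b c (a+b+c-2) =
      ∏ x ∈ range a,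
        (((x+b+c).factorial : ℚ) * (x).factorial /
          (((x+b).factorial : ℚ) * (x+c).factorial)) := by
    rw [q1, q2, ← prod_div_distrib]
    refine prod_congr rfl fun x _ => ?_
    rw [← prod_div_distrib]
    have step : ∏ y ∈ range b,
        ((((x+y+c+1).factorial : ℚ) / (x+y+1).factorial) /
          (((x+y+c).factorial : ℚ) / (x+y).factorial)) =
        ∏ y ∈ range b, ((((x+c:ℕ):ℚ) + y + 1) / (((x:ℕ):ℚ) + y + 1)) := by
      refine prod_congr rfl fun y _ => ?_
      have f1 : ((x+y+c+1).factorial : ℚ) = ((x+y+c+1 : ℕ) : ℚ) * (x+y+c).factorial := by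
        rw [show x+y+c+1 = (x+y+c)+1 from rfl, Nat.factorial_succ]; push_cast; ring
      have f2 : ((x+y+1).factorial : ℚ) = ((x+y+1 : ℕ) : ℚ) * (x+y).factorial := by
        rw [show x+y+1 = (x+y)+1 from rfl, Nat.factorial_succ]; push_cast; ring
      rw [f1, f2]
      have h1 := fact_ne (x+y+c)
      have h2 := fact_ne (x+y)
      have h3 : ((x+y+1 : ℕ) : ℚ) ≠ 0 := by positivity
      field_simp
      push_cast
      ring
    rw [step, prod_div_distrib, prod_asc_q (x+c) b, prod_asc_q x b]
    have h1 := fact_ne (x+c)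
    have h2 := fact_ne x
    have h3 := fact_ne (x+b)
    have h4 := fact_ne (x+c+b)
    rw [show x+c+b = x+b+c by ring]
    field_simp
  -- Step 4: evaluate the product over x via hyperfactorials
  rw [q3]
  have r1 : ∏ x ∈ range a, (((x+b+c).factorial : ℚ) * (x).factorial /
      (((x+b).factorial : ℚ) * (x+c).factorial)) =
      ((∏ x ∈ range a, ((x+b+c).factorial : ℚ)) * ∏ x ∈ range a, ((x).factorial : ℚ)) /
        ((∏ x ∈ range a, ((x+b).factorial : ℚ)) * ∏ x ∈ range a, ((x+c).factorial : ℚ)) := by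
    rw [prod_div_distrib, prod_mul_distrib, prod_mul_distrib]
  have r2 : ∏ x ∈ range a, ((x+b+c).factorial : ℚ) = hyperfact (a+b+c) / hyperfact (b+c) := by
    rw [show (∏ x ∈ range a, ((x+b+c).factorial : ℚ)) =
        ∏ x ∈ range a, (((b+c)+x).factorial : ℚ) from
        prod_congr rfl fun x _ => by rw [show x+b+c = (b+c)+x by ring],
      hyper_q (b+c) a, show b+c+a = a+b+c by ring]
  have r3 : ∏ x ∈ range a, ((x+b).factorial : ℚ) = hyperfact (a+b) / hyperfact b := by
    rw [show (∏ x ∈ range a, ((x+b).factorial : ℚ)) =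
        ∏ x ∈ range a, ((b+x).factorial : ℚ) from
        prod_congr rfl fun x _ => by rw [show x+b = b+x by ring],
      hyper_q b a, show b+a = a+b by ring]
  have r4 : ∏ x ∈ range a, ((x+c).factorial : ℚ) = hyperfact (a+c) / hyperfact c := by
    rw [show (∏ x ∈ range a, ((x+c).factorial : ℚ)) =
        ∏ x ∈ range a, ((c+x).factorial : ℚ) from
        prod_congr rfl fun x _ => by rw [show x+c = c+x by ring],
      hyper_q c a, show c+a = a+c by ring]
  have r5 : ∏ x ∈ range a, ((x).factorial : ℚ) = (hyperfact a : ℚ) := by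
    rw [hyperfact]; push_cast; rfl
  rw [r1, r2, r3, r4, r5]
  have n1 := hyperfact_ne (b+c)
  have n2 := hyperfact_ne b
  have n3 := hyperfact_ne c
  have n4 := hyperfact_ne (a+b)
  have n5 := hyperfact_ne (a+c)
  have n6 := hyperfact_ne a
  have n7 := hyperfact_ne (a+b+c)
  field_simp
end

section
/- For positive integers a, b, c, with d = a+b+c, \hat{a} = b+c, \hat{b} = a+c, \hat{c} = a+b, the identity C(\hat{c},\hat{b},\hat{a}; d-1) / (C(\hat{c},\hat{b},\hat{a}; d-2) * C(a,b;\hat{c}-1) C(b,c;\hat{a}-1) C(c,a;\hat{b}-1)) = T(2,d-1) T(2,a-1) T(2,b-1) T(2,c-1) / (T(2,\hat{a}-1) T(2,\hat{b}-1) T(2,\hat{c}-1)) holds (equality of positive rationals). -/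
open Finset

/-- The two-variable box product `C(a,b;n) = ∏_{x<a, y<b} max(n-x-y, 1)`. -/
def boxProd2 (a b n : ℕ) : ℕ := ∏ x ∈ range a, ∏ y ∈ range b, max (n - x - y) 1

/-- The simplex product `T(2,n) = ∏_{j=1}^{n} j!`. -/
def T2 (n : ℕ) : ℕ := ∏ j ∈ Icc 1 n, Nat.factorial j

def sf (n : ℕ) : ℕ := ∏ j ∈ range n, Nat.factorial j

lemma sf_zero : sf 0 = 1 := by simp [sf]

lemma T2_eq_sf (n : ℕ) : T2 n = sf (n + 1) := by
  induction n with
  | zero => simp [T2, sf]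
  | succ n ih =>
    unfold T2 sf at *
    rw [Finset.prod_Icc_succ_top (by omega), prod_range_succ, ih]

lemma sf_pos (n : ℕ) : 0 < sf n :=
  prod_pos fun j _ => Nat.factorial_pos j

lemma boxProd2_pos (A B n : ℕ) : 0 < boxProd2 A B n :=
  prod_pos fun _ _ => prod_pos fun _ _ => lt_of_lt_of_le one_pos (le_max_right _ _)

lemma boxProd3_pos (A B C n : ℕ) : 0 < boxProd3 A B C n :=
  prod_pos fun _ _ => prod_pos fun _ _ => prod_pos fun _ _ =>
    lt_of_lt_of_le one_pos (le_max_right _ _)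

lemma prod_max_mul_factorial (B m : ℕ) :
    (∏ y ∈ range B, max (m - y) 1) * (m - B).factorial = m.factorial := by
  induction B with
  | zero => simp
  | succ B ih =>
    rw [prod_range_succ]
    rcases le_or_gt m B with h | h
    · have h1 : m - B = 0 := by omega
      have h2 : m - (B + 1) = 0 := by omega
      have h3 : max (m - B) 1 = 1 := by omega
      rw [h2, h3, mul_one]
      simpa [h1] using ih
    · have h1 : max (m - B) 1 = m - B := by omega
      have h2 : m - B = (m - (B + 1)) + 1 := by omega
      rw [h1, mul_assoc, h2, ← Nat.factorial_succ]
      simpa [← h2] using ih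

lemma boxProd2_mul (A B n : ℕ) :
    boxProd2 A B n * ∏ x ∈ range A, (n - x - B).factorial
      = ∏ x ∈ range A, (n - x).factorial := by
  unfold boxProd2
  rw [← prod_mul_distrib]
  exact prod_congr rfl fun x _ => prod_max_mul_factorial B (n - x)

lemma prod_fac_sub (A n : ℕ) :
    (∏ x ∈ range A, (n - x).factorial) * sf (n + 1 - A) = sf (n + 1) := by
  induction A with
  | zero => simp
  | succ A ih =>
    rw [prod_range_succ]
    rcases le_or_gt A n with h | h
    · have h1 : n + 1 - A = (n - A) + 1 := by omega
      have h2 : n + 1 - (A + 1) = n - A := by omega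
      rw [h2]
      rw [h1, sf, prod_range_succ, ← sf] at ih
      calc (∏ x ∈ range A, (n - x).factorial) * (n - A).factorial * sf (n - A)
          = (∏ x ∈ range A, (n - x).factorial) * (sf (n - A) * (n - A).factorial) := by ring
        _ = sf (n + 1) := ih
    · have h1 : n - A = 0 := by omega
      have h2 : n + 1 - A = 0 := by omega
      have h3 : n + 1 - (A + 1) = 0 := by omega
      rw [h3, h1]
      simpa [h2] using ih

lemma shift3 (A B C n : ℕ) :
    boxProd3 A B C (n + 1) * boxProd2 A B (n + 1 - C)
      = boxProd3 A B C n * boxProd2 A B (n + 1) := by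
  unfold boxProd3 boxProd2
  rw [← prod_mul_distrib, ← prod_mul_distrib]
  refine prod_congr rfl fun x _ => ?_
  rw [← prod_mul_distrib, ← prod_mul_distrib]
  refine prod_congr rfl fun y _ => ?_
  have e1 : n + 1 - C - x - y = n + 1 - x - y - C := by omega
  have e3 : (∏ z ∈ range C, max (n - x - y - z) 1)
      = ∏ z ∈ range C, max (n + 1 - x - y - (z + 1)) 1 :=
    prod_congr rfl fun z _ => by
      rw [show n - x - y - z = n + 1 - x - y - (z + 1) by omega]
  have e4 : max (n + 1 - x - y) 1 = max (n + 1 - x - y - 0) 1 := by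
    rw [Nat.sub_zero]
  have hL : (∏ z ∈ range (C + 1), max (n + 1 - x - y - z) 1)
      = (∏ z ∈ range C, max (n + 1 - x - y - z) 1) * max (n + 1 - x - y - C) 1 :=
    prod_range_succ _ _
  have hR : (∏ z ∈ range (C + 1), max (n + 1 - x - y - z) 1)
      = (∏ z ∈ range C, max (n + 1 - x - y - (z + 1)) 1) * max (n + 1 - x - y - 0) 1 :=
    prod_range_succ' _ _
  rw [e1, e3, e4]
  exact hL.symm.trans hR

lemma boxProd2_eval (A B k : ℕ) (hk : 0 < k) (hkA : k ≤ A) :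
    boxProd2 A B (B + k - 1) * (sf k * sf (B + k - A)) = sf (B + k) := by
  have h1 := boxProd2_mul A B (B + k - 1)
  have h2 : ∏ x ∈ range A, (B + k - 1 - x - B).factorial = sf k := by
    have h := prod_fac_sub A (k - 1)
    have e : k - 1 + 1 - A = 0 := by omega
    have e2 : k - 1 + 1 = k := by omega
    rw [e, e2, sf_zero, mul_one] at h
    rw [← h]
    exact prod_congr rfl fun x _ => by
      rw [show B + k - 1 - x - B = k - 1 - x by omega]
  have h3 : (∏ x ∈ range A, (B + k - 1 - x).factorial) * sf (B + k - A) = sf (B + k) := by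
    have h := prod_fac_sub A (B + k - 1)
    have e : B + k - 1 + 1 = B + k := by omega
    rw [e] at h
    exact h
  calc boxProd2 A B (B + k - 1) * (sf k * sf (B + k - A))
      = (boxProd2 A B (B + k - 1) * ∏ x ∈ range A, (B + k - 1 - x - B).factorial)
          * sf (B + k - A) := by rw [h2]; ring
    _ = (∏ x ∈ range A, (B + k - 1 - x).factorial) * sf (B + k - A) := by rw [h1]
    _ = sf (B + k) := h3

/-- With `d = a+b+c`, `â = b+c`, `b̂ = a+c`, `ĉ = a+b`:
`C(ĉ,b̂,â;d-1) / (C(ĉ,b̂,â;d-2) ⬝ C(a,b;ĉ-1) C(b,c;â-1) C(c,a;b̂-1))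
 = T(2,d-1) T(2,a-1) T(2,b-1) T(2,c-1) / (T(2,â-1) T(2,b̂-1) T(2,ĉ-1))`,
as an equality of (positive) rationals. -/
theorem det_formula_eq_propp (a b c : ℕ) (ha : 0 < a) (hb : 0 < b) (hc : 0 < c) :
    (boxProd3 (a + b) (a + c) (b + c) (a + b + c - 1) : ℚ) /
      ((boxProd3 (a + b) (a + c) (b + c) (a + b + c - 2) : ℚ) *
        boxProd2 a b (a + b - 1) * boxProd2 b c (b + c - 1) * boxProd2 c a (a + c - 1)) =
    ((T2 (a + b + c - 1) * T2 (a - 1) * T2 (b - 1) * T2 (c - 1) : ℕ) : ℚ) /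
      ((T2 (b + c - 1) * T2 (a + c - 1) * T2 (a + b - 1) : ℕ) : ℚ) := by
  have tT : ∀ m : ℕ, 0 < m → T2 (m - 1) = sf m := fun m hm => by
    rw [T2_eq_sf]; congr 1; omega
  have R1 := shift3 (a + b) (a + c) (b + c) (a + b + c - 2)
  have e1 : a + b + c - 2 + 1 = a + b + c - 1 := by omega
  have e2 : a + b + c - 1 - (b + c) = a - 1 := by omega
  rw [e1, e2] at R1
  have R2 : boxProd2 (a + b) (a + c) (a - 1) = sf a := by
    have h1 := boxProd2_mul (a + b) (a + c) (a - 1)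
    have h2 : ∏ x ∈ range (a + b), (a - 1 - x - (a + c)).factorial = 1 :=
      prod_eq_one fun x _ => by
        rw [show a - 1 - x - (a + c) = 0 by omega, Nat.factorial_zero]
    have h3 : ∏ x ∈ range (a + b), (a - 1 - x).factorial = sf a := by
      have h := prod_fac_sub (a + b) (a - 1)
      have e : a - 1 + 1 - (a + b) = 0 := by omega
      have e' : a - 1 + 1 = a := by omega
      rw [e, e', sf_zero, mul_one] at h
      exact h
    rw [h2, mul_one] at h1
    rw [h1, h3]
  have R3 : boxProd2 (a + b) (a + c) (a + b + c - 1) * (sf b * sf c) = sf (a + b + c) := by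
    have h := boxProd2_eval (a + b) (a + c) b hb (by omega)
    have e : a + c + b - 1 = a + b + c - 1 := by omega
    have e' : a + c + b - (a + b) = c := by omega
    have e'' : a + c + b = a + b + c := by omega
    rw [e, e', e''] at h
    exact h
  have R4 : boxProd2 a b (a + b - 1) * (sf a * sf b) = sf (a + b) := by
    have h := boxProd2_eval a b a ha (le_refl a)
    have e : b + a - 1 = a + b - 1 := by omega
    have e' : b + a - a = b := by omega
    have e'' : b + a = a + b := by omega
    rw [e, e', e''] at h
    exact h
  have R5 : boxProd2 b c (b + c - 1) * (sf b * sf c) = sf (b + c) := by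
    have h := boxProd2_eval b c b hb (le_refl b)
    have e : c + b - 1 = b + c - 1 := by omega
    have e' : c + b - b = c := by omega
    have e'' : c + b = b + c := by omega
    rw [e, e', e''] at h
    exact h
  have R6 : boxProd2 c a (a + c - 1) * (sf c * sf a) = sf (a + c) := by
    have h := boxProd2_eval c a c hc (le_refl c)
    have e' : a + c - c = a := by omega
    rw [e'] at h
    exact h
  have hKey : boxProd3 (a + b) (a + c) (b + c) (a + b + c - 1) * (sf a * (sf b * sf c))
      = boxProd3 (a + b) (a + c) (b + c) (a + b + c - 2) * sf (a + b + c) := by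
    calc boxProd3 (a + b) (a + c) (b + c) (a + b + c - 1) * (sf a * (sf b * sf c))
        = (boxProd3 (a + b) (a + c) (b + c) (a + b + c - 1)
            * boxProd2 (a + b) (a + c) (a - 1)) * (sf b * sf c) := by rw [R2]; ring
      _ = (boxProd3 (a + b) (a + c) (b + c) (a + b + c - 2)
            * boxProd2 (a + b) (a + c) (a + b + c - 1)) * (sf b * sf c) := by rw [R1]
      _ = boxProd3 (a + b) (a + c) (b + c) (a + b + c - 2)
            * (boxProd2 (a + b) (a + c) (a + b + c - 1) * (sf b * sf c)) := by ring
      _ = boxProd3 (a + b) (a + c) (b + c) (a + b + c - 2) * sf (a + b + c) := by rw [R3]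
  rw [tT (a + b + c) (by omega), tT a ha, tT b hb, tT c hc,
    tT (b + c) (by omega), tT (a + c) (by omega), tT (a + b) (by omega)]
  have hQ4 : (boxProd2 a b (a + b - 1) : ℚ) * ((sf a : ℚ) * sf b) = sf (a + b) := by
    exact_mod_cast congrArg (Nat.cast : ℕ → ℚ) R4
  have hQ5 : (boxProd2 b c (b + c - 1) : ℚ) * ((sf b : ℚ) * sf c) = sf (b + c) := by
    exact_mod_cast congrArg (Nat.cast : ℕ → ℚ) R5
  have hQ6 : (boxProd2 c a (a + c - 1) : ℚ) * ((sf c : ℚ) * sf a) = sf (a + c) := by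
    exact_mod_cast congrArg (Nat.cast : ℕ → ℚ) R6
  have hQK : (boxProd3 (a + b) (a + c) (b + c) (a + b + c - 1) : ℚ)
        * ((sf a : ℚ) * ((sf b : ℚ) * sf c))
      = (boxProd3 (a + b) (a + c) (b + c) (a + b + c - 2) : ℚ) * sf (a + b + c) := by
    exact_mod_cast congrArg (Nat.cast : ℕ → ℚ) hKey
  have pos1 : (0 : ℚ) < (boxProd3 (a + b) (a + c) (b + c) (a + b + c - 2) : ℚ) *
      boxProd2 a b (a + b - 1) * boxProd2 b c (b + c - 1) * boxProd2 c a (a + c - 1) := by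
    have h1 := boxProd3_pos (a + b) (a + c) (b + c) (a + b + c - 2)
    have h2 := boxProd2_pos a b (a + b - 1)
    have h3 := boxProd2_pos b c (b + c - 1)
    have h4 := boxProd2_pos c a (a + c - 1)
    have q1 : (0:ℚ) < boxProd3 (a + b) (a + c) (b + c) (a + b + c - 2) := by exact_mod_cast h1
    have q2 : (0:ℚ) < boxProd2 a b (a + b - 1) := by exact_mod_cast h2
    have q3 : (0:ℚ) < boxProd2 b c (b + c - 1) := by exact_mod_cast h3
    have q4 : (0:ℚ) < boxProd2 c a (a + c - 1) := by exact_mod_cast h4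
    positivity
  have pos2 : (0 : ℚ) < ((sf (b + c) * sf (a + c) * sf (a + b) : ℕ) : ℚ) := by
    have := sf_pos (b + c); have := sf_pos (a + c); have := sf_pos (a + b)
    exact_mod_cast Nat.mul_pos (Nat.mul_pos ‹0 < sf (b+c)› ‹0 < sf (a+c)›) ‹0 < sf (a+b)›
  rw [div_eq_div_iff (ne_of_gt pos1) (ne_of_gt pos2)]
  push_cast
  rw [← hQ4, ← hQ5, ← hQ6]
  linear_combination ((boxProd2 a b (a + b - 1) : ℚ) * boxProd2 b c (b + c - 1)
    * boxProd2 c a (a + c - 1) * sf a * sf b * sf c) * hQK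
end
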